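/- arXiv:2111.08077 — 6 statements merged into one kernel-verified Lean document; each statement's English description precedes it below -/
import Mathlib

section
/- Every 3-uniform hypergraph on 5 vertices has a non-identity automorphism. -/
/-!
Taking complements, the 3-subsets of a 5-set correspond to its 2-subsets, so a 3-uniform
hypergraph `M` on five vertices is the same thing as the simple graph whose edges are the
complements of the edges of `M`, and the two have the same automorphisms. Every simple graph on
five vertices has a nontrivial automorphism (the smallest asymmetric graphs have six vertices),
indeed an involutive one; this is checked over the `2 ^ 10` graphs on `Fin 5`.
-/

open Finset Equiv

theorem Finset.image_compl_equiv {α β : Type*} [Fintype α] [Fintype β] [DecidableEq α]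
    [DecidableEq β] (e : α ≃ β) (s : Finset α) : sᶜ.image e = (s.image e)ᶜ :=
  coe_injective (by push_cast; exact e.image_compl s)

/-- Triangular numbering of the unordered pairs of distinct elements of `Fin 5`. -/
def pairIndex (a b : Fin 5) : Fin 10 :=
  if a < b then Fin.ofNat 10 (b * (b - 1) / 2 + a) else Fin.ofNat 10 (a * (a - 1) / 2 + b)

theorem pairIndex_eq_pairIndex {a b c d : Fin 5} (hab : a ≠ b) (hcd : c ≠ d)
    (h : pairIndex a b = pairIndex c d) : a = c ∧ b = d ∨ a = d ∧ b = c := by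
  revert a b c d
  decide

def involutions : List (Perm (Fin 5)) :=
  [swap 0 1, swap 0 2, swap 0 3, swap 0 4, swap 1 2, swap 1 3, swap 1 4, swap 2 3, swap 2 4,
    swap 3 4, swap 0 1 * swap 2 3, swap 0 1 * swap 2 4, swap 0 1 * swap 3 4,
    swap 0 2 * swap 1 3, swap 0 2 * swap 1 4, swap 0 2 * swap 3 4, swap 0 3 * swap 1 2,
    swap 0 3 * swap 1 4, swap 0 3 * swap 2 4, swap 0 4 * swap 1 2, swap 0 4 * swap 1 3,
    swap 0 4 * swap 2 3, swap 1 2 * swap 3 4, swap 1 3 * swap 2 4, swap 1 4 * swap 2 3]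

theorem one_notMem_involutions : (1 : Perm (Fin 5)) ∉ involutions := by
  decide

/-- A graph on `Fin 5` is encoded by the set `S` of indices of its edges. -/
theorem exists_mem_involutions_pairIndex_mem_iff (S : Finset (Fin 10)) :
    ∃ σ ∈ involutions, ∀ a b : Fin 5, a ≠ b →
      (pairIndex a b ∈ S ↔ pairIndex (σ a) (σ b) ∈ S) := by
  revert S
  decide +kernel

theorem SimpleGraph.exists_perm_ne_one_adj_iff_of_fin_five (G : SimpleGraph (Fin 5)) :
    ∃ σ : Perm (Fin 5), σ ≠ 1 ∧ ∀ a b, G.Adj a b ↔ G.Adj (σ a) (σ b) := by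
  classical
  set S := univ.filter fun i => ∃ a b, G.Adj a b ∧ pairIndex a b = i
  have hS {a b : Fin 5} (hab : a ≠ b) : pairIndex a b ∈ S ↔ G.Adj a b := by
    refine ⟨fun h => ?_, fun h => mem_filter.mpr ⟨mem_univ _, a, b, h, rfl⟩⟩
    obtain ⟨c, d, hcd, hi⟩ := (mem_filter.mp h).2
    obtain ⟨rfl, rfl⟩ | ⟨rfl, rfl⟩ := pairIndex_eq_pairIndex hab hcd.ne hi.symm
    exacts [hcd, hcd.symm]
  obtain ⟨σ, hσ, hσS⟩ := exists_mem_involutions_pairIndex_mem_iff S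
  refine ⟨σ, ne_of_mem_of_not_mem hσ one_notMem_involutions, fun a b => ?_⟩
  rcases eq_or_ne a b with rfl | hab
  · simp
  · rw [← hS hab, ← hS (σ.injective.ne hab)]
    exact hσS a b hab

theorem SimpleGraph.exists_perm_ne_one_adj_iff_of_card_eq_five {V : Type*} [Fintype V]
    (G : SimpleGraph V) (hV : Fintype.card V = 5) :
    ∃ σ : Perm V, σ ≠ 1 ∧ ∀ a b, G.Adj a b ↔ G.Adj (σ a) (σ b) := by
  let e : V ≃ Fin 5 := Fintype.equivFinOfCardEq hV
  obtain ⟨τ, hτ, hτG⟩ := (G.comap e.symm).exists_perm_ne_one_adj_iff_of_fin_five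
  refine ⟨e.symm.permCongrHom τ, (map_ne_one_iff _ (MulEquiv.injective _)).mpr hτ,
    fun a b => ?_⟩
  simpa using hτG (e a) (e b)

section ComplPairGraph

variable {V : Type*} [Fintype V] [DecidableEq V]

def complPairGraph (M : Finset (Finset V)) : SimpleGraph V where
  Adj a b := a ≠ b ∧ ({a, b} : Finset V)ᶜ ∈ M
  symm := ⟨fun a b h => ⟨h.1.symm, pair_comm a b ▸ h.2⟩⟩
  loopless := ⟨fun _ h => h.1 rfl⟩

theorem mem_iff_image_mem_of_complPairGraph_adj_iff {M : Finset (Finset V)}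
    (hM : ∀ E ∈ M, Eᶜ.card = 2) {σ : Perm V}
    (hσ : ∀ a b, (complPairGraph M).Adj a b ↔ (complPairGraph M).Adj (σ a) (σ b))
    (E : Finset V) : E ∈ M ↔ E.image σ ∈ M := by
  by_cases hE : Eᶜ.card = 2
  · obtain ⟨a, b, hab, hEab⟩ := card_eq_two.mp hE
    rw [← compl_compl E, hEab, image_compl_equiv, image_insert, image_singleton]
    simpa [complPairGraph, hab] using hσ a b
  · have hcard : (E.image σ)ᶜ.card = Eᶜ.card := by
      rw [card_compl, card_compl, card_image_of_injective _ σ.injective]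
    exact iff_of_false (fun h => hE (hM E h)) (fun h => hE (hcard ▸ hM _ h))

end ComplPairGraph

/-- Every 3-uniform hypergraph on 5 vertices has a non-identity
automorphism. -/
theorem stmt_7 (V : Type) [Fintype V] [DecidableEq V] (hV : Fintype.card V = 5)
    (M : Finset (Finset V)) (hM : ∀ E ∈ M, E.card = 3) :
    ∃ φ : Equiv.Perm V, φ ≠ 1 ∧ ∀ E : Finset V, E ∈ M ↔ E.image ⇑φ ∈ M := by
  have hM' : ∀ E ∈ M, Eᶜ.card = 2 := fun E hE => by rw [card_compl, hV, hM E hE]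
  obtain ⟨σ, hσ, hσG⟩ := (complPairGraph M).exists_perm_ne_one_adj_iff_of_card_eq_five hV
  exact ⟨σ, hσ, mem_iff_image_mem_of_complPairGraph_adj_iff hM' hσG⟩
end

section
/- For every integer k ≥ 4, there exists an asymmetric k-uniform hypergraph on k+2 vertices; combined with the fact that no asymmetric k-uniform hypergraph on k+1 vertices or on 2 ≤ n ≤ k vertices exists, the minimum number of vertices of an asymmetric k-uniform hypergraph (with at least 2 vertices) is k+2. -/
/-!
The complements of the edges of a graph on `k + 2` vertices form a `k`-uniform hypergraph with
the same automorphisms, so it suffices to exhibit an asymmetric graph on `m ≥ 6` vertices: the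
path `0 - 1 - ⋯ - (m-1)` with the chord `1 - 3`. An automorphism fixes `2` (the only vertex of the
triangle `123` with no neighbour off it) and `1` (the only triangle vertex next to a leaf), and
then every vertex along the path.

Conversely, on `n ≤ k + 1` vertices every edge misses at most one vertex, so the hypergraph is
determined by which vertices `x` have `{x}ᶜ` as an edge; two vertices on the same side of this
partition can be swapped.
-/

open Finset

namespace SimpleGraph

variable {V W : Type*} {G : SimpleGraph V} {H : SimpleGraph W}

def OnTriangle (G : SimpleGraph V) (x : V) : Prop :=
  ∃ y z, G.Adj x y ∧ G.Adj y z ∧ G.Adj x z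

def IsLeaf (G : SimpleGraph V) (x : V) : Prop :=
  ∃ y, ∀ z, G.Adj x z ↔ z = y

namespace Iso

lemma onTriangle_apply_iff (f : G ≃g H) {x : V} : H.OnTriangle (f x) ↔ G.OnTriangle x := by
  simp only [OnTriangle, f.surjective.exists, f.map_adj_iff]

lemma isLeaf_apply_iff (f : G ≃g H) {x : V} : H.IsLeaf (f x) ↔ G.IsLeaf x := by
  simp only [IsLeaf, f.surjective.exists, f.surjective.forall, f.map_adj_iff, f.injective.eq_iff]

lemma apply_eq_of_adj {f : G ≃g G} {x y : V} (hx : f x = x) (hxy : G.Adj x y)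
    (h : ∀ z, G.Adj x z → z ≠ y → f z = z) : f y = y := by
  by_contra hne
  have hadj : G.Adj x (f y) := by simpa only [hx] using f.map_adj_iff.2 hxy
  exact hne (f.injective (h _ hadj hne))

end Iso

end SimpleGraph

open SimpleGraph

def chordedPath (m : ℕ) : SimpleGraph (Fin m) where
  Adj x y := x.val + 1 = y.val ∨ y.val + 1 = x.val ∨ x.val = 1 ∧ y.val = 3 ∨ x.val = 3 ∧ y.val = 1
  symm := ⟨fun _ _ => by omega⟩
  loopless := ⟨fun _ => by omega⟩

namespace chordedPath

variable {m : ℕ}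

lemma adj_iff {x y : Fin m} : (chordedPath m).Adj x y ↔
    x.val + 1 = y.val ∨ y.val + 1 = x.val ∨ x.val = 1 ∧ y.val = 3 ∨ x.val = 3 ∧ y.val = 1 :=
  Iff.rfl

lemma onTriangle_iff (hm : 4 ≤ m) {x : Fin m} :
    (chordedPath m).OnTriangle x ↔ 1 ≤ x.val ∧ x.val ≤ 3 := by
  constructor
  · rintro ⟨y, z, hxy, hyz, hxz⟩
    rw [adj_iff] at hxy hyz hxz
    omega
  · intro hx
    rcases (by omega : x.val = 1 ∨ x.val = 2 ∨ x.val = 3) with h | h | h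
    · exact ⟨⟨2, by omega⟩, ⟨3, by omega⟩, by simp [adj_iff, h]⟩
    · exact ⟨⟨1, by omega⟩, ⟨3, by omega⟩, by simp [adj_iff, h]⟩
    · exact ⟨⟨1, by omega⟩, ⟨2, by omega⟩, by simp [adj_iff, h]⟩

lemma val_eq_of_isLeaf {x : Fin m} (hx : (chordedPath m).IsLeaf x) :
    x.val = 0 ∨ x.val + 1 = m := by
  obtain ⟨y, hy⟩ := hx
  by_contra! h
  have hprev := (hy ⟨x.val - 1, by omega⟩).1 (by simp only [adj_iff]; omega)
  have hnext := (hy ⟨x.val + 1, by omega⟩).1 (Or.inl rfl)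
  simp only [Fin.ext_iff] at hprev hnext
  omega

lemma isLeaf_of_val_eq_zero (hm : 2 ≤ m) {x : Fin m} (hx : x.val = 0) :
    (chordedPath m).IsLeaf x :=
  ⟨⟨1, hm⟩, fun z => by simp only [adj_iff, Fin.ext_iff]; omega⟩

lemma onTriangle_and_forall_adj_onTriangle_iff (hm : 5 ≤ m) {x : Fin m} :
    ((chordedPath m).OnTriangle x ∧ ∀ y, (chordedPath m).Adj x y → (chordedPath m).OnTriangle y) ↔
      x.val = 2 := by
  simp only [onTriangle_iff (by omega : 4 ≤ m), adj_iff]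
  constructor
  · rintro ⟨hx, hadj⟩
    have h0 := hadj ⟨0, by omega⟩
    have h4 := hadj ⟨4, by omega⟩
    simp only at h0 h4
    omega
  · intro hx
    exact ⟨by omega, fun y hy => by omega⟩

lemma onTriangle_and_adj_isLeaf_iff (hm : 6 ≤ m) {x : Fin m} :
    ((chordedPath m).OnTriangle x ∧ ∃ y, (chordedPath m).Adj x y ∧ (chordedPath m).IsLeaf y) ↔
      x.val = 1 := by
  rw [onTriangle_iff (by omega)]
  constructor
  · rintro ⟨hx, y, hxy, hy⟩
    have := val_eq_of_isLeaf hy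
    rw [adj_iff] at hxy
    omega
  · intro hx
    exact ⟨by omega, ⟨0, by omega⟩, by simp only [adj_iff]; omega,
      isLeaf_of_val_eq_zero (by omega) rfl⟩

theorem iso_apply_eq (hm : 6 ≤ m) (f : chordedPath m ≃g chordedPath m) (x : Fin m) : f x = x := by
  have fixed_of_iff {P : Fin m → Prop} {n : ℕ} (hf : ∀ x, P (f x) ↔ P x)
      (hP : ∀ x, P x ↔ x.val = n) (x : Fin m) (hx : x.val = n) : f x = x :=
    Fin.ext (((hP _).1 ((hf x).2 ((hP x).2 hx))).trans hx.symm)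
  have h2 := fixed_of_iff
    (fun x => by
      rw [f.onTriangle_apply_iff, f.surjective.forall]
      simp only [f.map_adj_iff, f.onTriangle_apply_iff])
    (fun _ => onTriangle_and_forall_adj_onTriangle_iff (by omega))
  have h1 := fixed_of_iff
    (fun x => by
      rw [f.onTriangle_apply_iff, f.surjective.exists]
      simp only [f.map_adj_iff, f.isLeaf_apply_iff])
    (fun _ => onTriangle_and_adj_isLeaf_iff hm)
  have hpos : ∀ n, ∀ x : Fin m, x.val = n → 1 ≤ n → f x = x := by
    intro n
    induction n using Nat.strong_induction_on with
    | _ n ih =>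
      intro x hx hn
      rcases (by omega : n = 1 ∨ n = 2 ∨ 3 ≤ n) with rfl | rfl | hn
      · exact h1 x hx
      · exact h2 x hx
      -- every neighbour of `n - 1` other than `n` has its value in `[1, n)`
      · refine f.apply_eq_of_adj (x := ⟨n - 1, by omega⟩) (ih (n - 1) (by omega) _ rfl (by omega))
          (by simp only [adj_iff]; omega) fun z hz hzx => ih z.val ?_ z rfl ?_ <;>
        · simp only [adj_iff, ne_eq, Fin.ext_iff] at hz hzx
          omega
  by_cases hx : x.val = 0
  · refine f.apply_eq_of_adj (x := ⟨1, by omega⟩) (h1 _ rfl) (by simp only [adj_iff]; omega)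
      fun z hz hzx => hpos z.val z rfl ?_
    simp only [adj_iff, ne_eq, Fin.ext_iff] at hz hzx
    omega
  · exact hpos _ x rfl (by omega)

end chordedPath

section Hypergraph

variable {α : Type*} [Fintype α] [DecidableEq α]

def IsAsymmetricHypergraph (M : Finset (Finset α)) : Prop :=
  ∀ φ : Equiv.Perm α, (∀ E : Finset α, E ∈ M ↔ E.image ⇑φ ∈ M) → φ = 1

lemma Equiv.Perm.image_finset_compl (φ : Equiv.Perm α) (E : Finset α) :
    Eᶜ.image φ = (E.image φ)ᶜ := by
  ext y
  obtain ⟨x, rfl⟩ := φ.surjective y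
  simp

namespace SimpleGraph

open Classical in
noncomputable def edgeComplements (G : SimpleGraph α) : Finset (Finset α) :=
  univ.filter fun E => ∃ x y, G.Adj x y ∧ E = {x, y}ᶜ

variable {G : SimpleGraph α}

lemma compl_pair_mem_edgeComplements {x y : α} : {x, y}ᶜ ∈ G.edgeComplements ↔ G.Adj x y := by
  simp only [edgeComplements, mem_filter, mem_univ, true_and, compl_inj_iff]
  refine ⟨fun ⟨a, b, hab, he⟩ => ?_, fun h => ⟨x, y, h, rfl⟩⟩
  have hset := congrArg ((↑) : Finset α → Set α) he
  rw [coe_pair, coe_pair, Set.pair_eq_pair_iff] at hset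
  rcases hset with ⟨rfl, rfl⟩ | ⟨rfl, rfl⟩
  exacts [hab, hab.symm]

lemma card_of_mem_edgeComplements {E : Finset α} (hE : E ∈ G.edgeComplements) :
    E.card = Fintype.card α - 2 := by
  simp only [edgeComplements, mem_filter, mem_univ, true_and] at hE
  obtain ⟨x, y, hxy, rfl⟩ := hE
  rw [card_compl, card_pair hxy.ne]

def isoOfEdgeComplements (φ : Equiv.Perm α)
    (hφ : ∀ E : Finset α, E ∈ G.edgeComplements ↔ E.image ⇑φ ∈ G.edgeComplements) : G ≃g G where
  toEquiv := φ
  map_rel_iff' {x y} := by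
    rw [← compl_pair_mem_edgeComplements, ← compl_pair_mem_edgeComplements (x := x), hφ {x, y}ᶜ,
      φ.image_finset_compl, image_insert, image_singleton]

lemma isAsymmetricHypergraph_edgeComplements (hG : ∀ (f : G ≃g G) x, f x = x) :
    IsAsymmetricHypergraph G.edgeComplements :=
  fun φ hφ => Equiv.ext (hG (isoOfEdgeComplements φ hφ))

end SimpleGraph

lemma not_isAsymmetricHypergraph_of_card_compl_le_one {M : Finset (Finset α)}
    (hM : ∀ E ∈ M, Eᶜ.card ≤ 1) {a b : α} (hab : a ≠ b) (hlabel : {a}ᶜ ∈ M ↔ {b}ᶜ ∈ M) :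
    ¬ IsAsymmetricHypergraph M := by
  set φ := Equiv.swap a b
  have hsingle : ∀ x, {φ x}ᶜ ∈ M ↔ {x}ᶜ ∈ M := by
    intro x
    rcases eq_or_ne x a with rfl | hxa
    · simpa [φ] using hlabel.symm
    rcases eq_or_ne x b with rfl | hxb
    · simpa [φ] using hlabel
    · rw [Equiv.swap_apply_of_ne_of_ne hxa hxb]
  have hmaps : ∀ E ∈ M, E.image φ ∈ M := by
    intro E hE
    rcases Nat.le_one_iff_eq_zero_or_eq_one.1 (hM E hE) with h | h
    · rw [card_eq_zero, compl_eq_empty_iff] at h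
      rwa [h, image_univ_equiv, ← h]
    · obtain ⟨x, hx⟩ := card_eq_one.1 h
      rw [← compl_eq_comm.1 hx] at hE ⊢
      rwa [φ.image_finset_compl, image_singleton, hsingle]
  intro hasym
  have hφ : φ = 1 := hasym φ fun E => ⟨hmaps E, fun h => by
    simpa [image_image, Function.comp_def, φ] using hmaps _ h⟩
  exact hab (by simpa [φ] using congrArg (· b) hφ)

lemma not_isAsymmetricHypergraph_of_card_le_succ {k : ℕ} (hk : 2 ≤ k) (hα : 2 ≤ Fintype.card α)
    (hαk : Fintype.card α ≤ k + 1) {M : Finset (Finset α)} (hM : ∀ E ∈ M, E.card = k) :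
    ¬ IsAsymmetricHypergraph M := by
  have hcompl : ∀ E ∈ M, Eᶜ.card ≤ 1 := fun E hE => by
    rw [card_compl, hM E hE]
    omega
  obtain ⟨a, b, hab, hlabel⟩ : ∃ a b : α, a ≠ b ∧ ({a}ᶜ ∈ M ↔ {b}ᶜ ∈ M) := by
    rcases (by omega : Fintype.card α ≤ k ∨ Fintype.card α = k + 1) with hle | heq
    · have hnot : ∀ x : α, {x}ᶜ ∉ M := fun x hx => by
        have := hM _ hx
        rw [card_compl, card_singleton] at this
        omega
      obtain ⟨a, b, hab⟩ := Fintype.exists_pair_of_one_lt_card hα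
      exact ⟨a, b, hab, iff_of_false (hnot a) (hnot b)⟩
    · obtain ⟨a, b, hab, hlabel⟩ := Fintype.exists_ne_map_eq_of_card_lt (fun x : α => {x}ᶜ ∈ M)
        (by rw [Fintype.card_prop]; omega)
      exact ⟨a, b, hab, hlabel.to_iff⟩
  exact not_isAsymmetricHypergraph_of_card_compl_le_one hcompl hab hlabel

end Hypergraph

/-- For every k ≥ 4, the minimum number of vertices (≥ 2) of an
asymmetric k-uniform hypergraph is k+2. -/
theorem stmt_9 (k : ℕ) (hk : 4 ≤ k) :
    IsLeast {n : ℕ | 2 ≤ n ∧ ∃ M : Finset (Finset (Fin n)),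
      (∀ E ∈ M, E.card = k) ∧
      ∀ φ : Equiv.Perm (Fin n),
        (∀ E : Finset (Fin n), E ∈ M ↔ E.image ⇑φ ∈ M) → φ = 1} (k + 2) := by
  refine ⟨⟨by omega, (chordedPath (k + 2)).edgeComplements, fun E hE => ?_, ?_⟩, ?_⟩
  · simpa using card_of_mem_edgeComplements hE
  · exact isAsymmetricHypergraph_edgeComplements (chordedPath.iso_apply_eq (by omega))
  · rintro n ⟨hn, M, hM, hasym⟩
    by_contra! hlt
    exact not_isAsymmetricHypergraph_of_card_le_succ (by omega) (by rwa [Fintype.card_fin])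
      (by rw [Fintype.card_fin]; omega) hM hasym
end

section
/- For every k ≥ 4, the k-uniform hypergraph G_k on vertex set {v₁,...,v_{2k−1}} with hyperedges M_i = {v_i, v_{i+1}, ..., v_{i+k−1}} for i = 1, ..., k has exactly two automorphisms: the identity and the reflection φ(v_i) = v_{2k−i}. -/
/-!
The edge map of an automorphism preserves the sizes of pairwise intersections, and
`|M_i ∩ M_j| = k - |i - j|`, so it is an isometry of `{0, …, k-1}`: the identity or
the reversal `i ↦ k-1-i`. Composing with the reflection, which realises the reversal,
reduces to automorphisms fixing every edge; these fix every vertex, because two distinct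
vertices are always separated by an edge.
-/

open Finset

namespace IntervalHypergraph

def edges (k : ℕ) : Finset (Finset ℕ) := (range k).image fun i => Ico i (i + k)

def IsAut (k : ℕ) (φ : Equiv.Perm ℕ) : Prop :=
  ∀ E : Finset ℕ, E ∈ edges k ↔ E.image φ ∈ edges k

theorem mem_edges {k : ℕ} {E : Finset ℕ} : E ∈ edges k ↔ ∃ i < k, Ico i (i + k) = E := by
  simp [edges]

def reflectFun (k x : ℕ) : ℕ := if x < 2 * k - 1 then 2 * k - 2 - x else x

theorem reflectFun_involutive (k : ℕ) : Function.Involutive (reflectFun k) := by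
  intro x
  unfold reflectFun
  split_ifs <;> omega

def reflect (k : ℕ) : Equiv.Perm ℕ := (reflectFun_involutive k).toPerm

theorem reflect_apply (k x : ℕ) : reflect k x = reflectFun k x := rfl

theorem reflect_apply_of_lt {k x : ℕ} (hx : x < 2 * k - 1) : reflect k x = 2 * k - 2 - x :=
  if_pos hx

theorem reflect_apply_of_le {k x : ℕ} (hx : 2 * k - 1 ≤ x) : reflect k x = x :=
  if_neg (by omega)

theorem reflect_inv (k : ℕ) : (reflect k)⁻¹ = reflect k :=
  Function.Involutive.toPerm_symm _

theorem image_reflect_Ico {k i : ℕ} (hi : i < k) :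
    (Ico i (i + k)).image (reflect k) = Ico (k - 1 - i) (k - 1 - i + k) := by
  ext x
  simp only [mem_image, mem_Ico, reflect_apply, reflectFun]
  constructor
  · rintro ⟨a, ⟨ha₁, ha₂⟩, rfl⟩
    split_ifs <;> omega
  · rintro ⟨hx₁, hx₂⟩
    exact ⟨2 * k - 2 - x, ⟨by omega, by omega⟩, by rw [if_pos (by omega)]; omega⟩

theorem isAut_reflect (k : ℕ) : IsAut k (reflect k) := by
  have maps_to : ∀ E ∈ edges k, E.image (reflect k) ∈ edges k := by
    simp only [mem_edges]
    rintro _ ⟨i, hi, rfl⟩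
    exact ⟨k - 1 - i, by omega, (image_reflect_Ico hi).symm⟩
  refine fun E => ⟨maps_to E, fun h => ?_⟩
  simpa [image_image, Function.comp_def, reflect_apply, reflectFun_involutive k _]
    using maps_to _ h

/-- Any two distinct vertices are separated by one of the edges `M_{min v (k-1)}` and
`M_{v-(k-1)}` of `v`, or by the corresponding edges of `u`. -/
theorem eq_of_forall_mem_Ico_iff {k u v : ℕ} (hv : v < 2 * k - 1)
    (h : ∀ i < k, u ∈ Ico i (i + k) ↔ v ∈ Ico i (i + k)) : u = v := by
  have h₁ := h (min v (k - 1)) (by omega)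
  have h₂ := h (v - (k - 1)) (by omega)
  simp only [mem_Ico] at h₁ h₂
  have h₃ := h (min u (k - 1)) (by omega)
  have h₄ := h (u - (k - 1)) (by omega)
  simp only [mem_Ico] at h₃ h₄
  omega

theorem eq_one_of_image_Ico_eq {k : ℕ} {φ : Equiv.Perm ℕ}
    (hfix : ∀ x : ℕ, x ∉ range (2 * k - 1) → φ x = x)
    (h : ∀ i < k, (Ico i (i + k)).image φ = Ico i (i + k)) : φ = 1 := by
  ext v
  rw [Equiv.Perm.one_apply]
  by_cases hv : v < 2 * k - 1
  · refine eq_of_forall_mem_Ico_iff hv fun i hi => ?_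
    simpa only [h i hi] using φ.injective.mem_finset_image (a := v) (s := Ico i (i + k))
  · exact hfix v (by simpa using hv)

theorem card_Ico_inter_Ico_add (i j k : ℕ) :
    #(Ico i (i + k) ∩ Ico j (j + k)) = min (i + k) (j + k) - max i j := by
  rw [Ico_inter_Ico, Nat.card_Ico]

namespace IsAut

variable {k : ℕ} {φ : Equiv.Perm ℕ}

theorem exists_image_Ico_eq (hφ : IsAut k φ) {i : ℕ} (hi : i < k) :
    ∃ j < k, (Ico i (i + k)).image φ = Ico j (j + k) := by
  obtain ⟨j, hj, hje⟩ := mem_edges.mp ((hφ _).mp (mem_edges.mpr ⟨i, hi, rfl⟩))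
  exact ⟨j, hj, hje.symm⟩

theorem image_Ico_eq_or (hφ : IsAut k φ) (hk : 0 < k) :
    (∀ i < k, (Ico i (i + k)).image φ = Ico i (i + k)) ∨
      ∀ i < k, (Ico i (i + k)).image φ = Ico (k - 1 - i) (k - 1 - i + k) := by
  obtain ⟨j₀, hj₀, hφ₀⟩ := hφ.exists_image_Ico_eq hk
  have dist_eq : ∀ i < k, ∀ j, (Ico i (i + k)).image φ = Ico j (j + k) →
      max j₀ j - min j₀ j = i := by
    intro i hi j hφi
    have hcard := card_image_of_injective (Ico 0 (0 + k) ∩ Ico i (i + k)) φ.injective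
    rw [image_inter _ _ φ.injective, hφ₀, hφi, card_Ico_inter_Ico_add,
      card_Ico_inter_Ico_add] at hcard
    omega
  have hj₀' : j₀ = 0 ∨ j₀ = k - 1 := by
    obtain ⟨j, hj, hφj⟩ := hφ.exists_image_Ico_eq (i := k - 1) (by omega)
    have := dist_eq _ (by omega) j hφj
    omega
  rcases hj₀' with hj₀' | hj₀'
  · refine .inl fun i hi => ?_
    obtain ⟨j, hj, hφi⟩ := hφ.exists_image_Ico_eq hi
    have := dist_eq i hi j hφi
    rwa [show j = i by omega] at hφi
  · refine .inr fun i hi => ?_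
    obtain ⟨j, hj, hφi⟩ := hφ.exists_image_Ico_eq hi
    have := dist_eq i hi j hφi
    rwa [show j = k - 1 - i by omega] at hφi

theorem eq_one_or_eq_reflect (hφ : IsAut k φ) (hk : 0 < k)
    (hfix : ∀ x : ℕ, x ∉ range (2 * k - 1) → φ x = x) : φ = 1 ∨ φ = reflect k := by
  rcases hφ.image_Ico_eq_or hk with hid | hrev
  · exact .inl (eq_one_of_image_Ico_eq hfix hid)
  · refine .inr ?_
    have hfix' : ∀ x : ℕ, x ∉ range (2 * k - 1) → (reflect k * φ) x = x := fun x hx => by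
      rw [Equiv.Perm.mul_apply, hfix x hx, reflect_apply_of_le (by simpa using hx)]
    have : reflect k * φ = 1 := eq_one_of_image_Ico_eq hfix' fun i hi => by
      rw [Equiv.Perm.coe_mul, ← image_image, hrev i hi, image_reflect_Ico (by omega),
        show k - 1 - (k - 1 - i) = i by omega]
    rw [eq_inv_of_mul_eq_one_right this, reflect_inv]

end IsAut

end IntervalHypergraph

/-- For every k ≥ 4, the interval k-uniform hypergraph G_k on
vertex set {0, ..., 2k-2} with hyperedges M_i = {i, ..., i+k-1} for
i = 0, ..., k-1 has exactly two automorphisms: the identity and the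
reflection i ↦ 2k-2-i. Automorphisms are modelled as permutations of ℕ
fixing everything outside the vertex set. -/
theorem stmt_12 (k : ℕ) (hk : 4 ≤ k) :
    ∃ ψ : Equiv.Perm ℕ, ψ ≠ 1 ∧
      (∀ x : ℕ, x ∉ Finset.range (2 * k - 1) → ψ x = x) ∧
      (∀ i < 2 * k - 1, ψ i = 2 * k - 2 - i) ∧
      (∀ E : Finset ℕ,
        E ∈ (Finset.range k).image (fun i => Finset.Ico i (i + k)) ↔
        E.image ⇑ψ ∈ (Finset.range k).image (fun i => Finset.Ico i (i + k))) ∧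
      ∀ φ : Equiv.Perm ℕ,
        (∀ x : ℕ, x ∉ Finset.range (2 * k - 1) → φ x = x) →
        (∀ E : Finset ℕ,
          E ∈ (Finset.range k).image (fun i => Finset.Ico i (i + k)) ↔
          E.image ⇑φ ∈ (Finset.range k).image (fun i => Finset.Ico i (i + k))) →
        φ = 1 ∨ φ = ψ := by
  open IntervalHypergraph in
  refine ⟨reflect k, fun h => ?_, fun x hx => reflect_apply_of_le (by simpa using hx),
    fun i hi => reflect_apply_of_lt hi, isAut_reflect k,
    fun φ hfix hφ => IsAut.eq_one_or_eq_reflect hφ (by omega) hfix⟩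
  have h₀ := congrArg (· 0) h
  simp only [IntervalHypergraph.reflect_apply_of_lt (show 0 < 2 * k - 1 by omega),
    Equiv.Perm.one_apply] at h₀
  omega
end

section
/- For every k ≥ 4, the only automorphism of the interval hypergraph G_k that maps the set {v_{2k−2}, v_{2k−1}} to itself is the identity. -/
/-!
An automorphism of `G_k` preserves vertex degrees. Vertex `x` (numbered from `0`) has degree
`min (x + 1) k - (x + 1 - k)`, so it is sent to `x` or to its mirror image `2k - 2 - x`.
The last vertex has degree one and must therefore be fixed, since its mirror `0` is not among
the last two vertices. Every vertex `x ≥ k - 1` shares the last edge with it, so its image does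
too, which rules out the mirror; a vertex `x < k - 1` sent to its mirror would collide with the
mirror itself, which is already fixed.
-/

open Finset

section

variable {α : Type*} [DecidableEq α]

def IsHypergraphAut (H : Finset (Finset α)) (φ : Equiv.Perm α) : Prop :=
  ∀ E : Finset α, E ∈ H ↔ E.image φ ∈ H

def hypergraphDegree (H : Finset (Finset α)) (x : α) : ℕ := #{E ∈ H | x ∈ E}

namespace IsHypergraphAut

variable {H : Finset (Finset α)} {φ : Equiv.Perm α}

theorem image_edges (hφ : IsHypergraphAut H φ) : H.image (·.image φ) = H :=
  eq_of_subset_of_card_le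
    (fun _ hE => by
      obtain ⟨F, hF, rfl⟩ := mem_image.1 hE
      exact (hφ F).1 hF)
    (card_image_of_injective _ (image_injective φ.injective)).ge

theorem degree_apply (hφ : IsHypergraphAut H φ) (x : α) :
    hypergraphDegree H (φ x) = hypergraphDegree H x := by
  unfold hypergraphDegree
  conv_lhs => rw [← hφ.image_edges]
  rw [filter_image, card_image_of_injective _ (image_injective φ.injective)]
  simp only [φ.injective.mem_finset_image]

end IsHypergraphAut

end

/-- The edges of `G_k`, with the vertices `v₁, …, v_{2k-1}` numbered `0, …, 2k - 2`. -/
def intervalEdges (k : ℕ) : Finset (Finset ℕ) := (range k).image fun i => Ico i (i + k)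

theorem Ico_add_injective {k : ℕ} (hk : 0 < k) : Function.Injective fun i => Ico i (i + k) := by
  intro i j (h : Ico i (i + k) = Ico j (j + k))
  have hi : i ∈ Ico j (j + k) := h ▸ left_mem_Ico.2 (by omega)
  have hj : j ∈ Ico i (i + k) := h.symm ▸ left_mem_Ico.2 (by omega)
  rw [mem_Ico] at hi hj
  omega

theorem hypergraphDegree_intervalEdges {k : ℕ} (hk : 0 < k) (x : ℕ) :
    hypergraphDegree (intervalEdges k) x = min (x + 1) k - (x + 1 - k) := by
  have hfilter : {i ∈ range k | x ∈ Ico i (i + k)} = Ico (x + 1 - k) (min (x + 1) k) := by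
    ext i
    simp only [mem_filter, mem_range, mem_Ico]
    omega
  rw [hypergraphDegree, intervalEdges, filter_image,
    card_image_of_injective _ (Ico_add_injective hk), hfilter, Nat.card_Ico]

theorem le_of_mem_intervalEdges {k x : ℕ} {E : Finset ℕ} (hE : E ∈ intervalEdges k)
    (hlast : 2 * k - 2 ∈ E) (hx : x ∈ E) : k - 1 ≤ x := by
  obtain ⟨i, hi, rfl⟩ := mem_image.1 hE
  rw [mem_range] at hi
  rw [mem_Ico] at hlast hx
  omega

/-- For every k ≥ 4, the only automorphism of the interval
hypergraph G_k that maps the set of the last two vertices {2k-3, 2k-2}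
to itself is the identity. -/
theorem stmt_13 (k : ℕ) (hk : 4 ≤ k) :
    ∀ φ : Equiv.Perm ℕ,
      (∀ x : ℕ, x ∉ Finset.range (2 * k - 1) → φ x = x) →
      (∀ E : Finset ℕ,
        E ∈ (Finset.range k).image (fun i => Finset.Ico i (i + k)) ↔
        E.image ⇑φ ∈ (Finset.range k).image (fun i => Finset.Ico i (i + k))) →
      ({φ (2 * k - 3), φ (2 * k - 2)} : Finset ℕ) = {2 * k - 3, 2 * k - 2} →
      φ = 1 := by
  intro φ hout hmap hpair
  have hφ : IsHypergraphAut (intervalEdges k) φ := hmap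
  have fixed_or_mirrored : ∀ x < 2 * k - 1, φ x = x ∨ φ x + x = 2 * k - 2 := by
    intro x hx
    have hdeg := hφ.degree_apply x
    rw [hypergraphDegree_intervalEdges (by omega), hypergraphDegree_intervalEdges (by omega)]
      at hdeg
    omega
  have hlast : φ (2 * k - 2) = 2 * k - 2 := by
    have hmem : φ (2 * k - 2) ∈ ({2 * k - 3, 2 * k - 2} : Finset ℕ) := hpair ▸ by simp
    rw [mem_insert, mem_singleton] at hmem
    rcases fixed_or_mirrored (2 * k - 2) (by omega) with h | h <;> omega
  have fixed_of_le : ∀ x, k - 1 ≤ x → x < 2 * k - 1 → φ x = x := by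
    intro x hx₁ hx₂
    have hE : Ico (k - 1) (k - 1 + k) ∈ intervalEdges k :=
      mem_image_of_mem _ (mem_range.2 (by omega))
    have hφx := le_of_mem_intervalEdges ((hφ _).1 hE)
      (hlast ▸ mem_image_of_mem φ (mem_Ico.2 (by omega)))
      (mem_image_of_mem φ (mem_Ico.2 ⟨hx₁, by omega⟩))
    rcases fixed_or_mirrored x hx₂ with h | h <;> omega
  ext x
  rw [Equiv.Perm.one_apply]
  by_cases hx : x < 2 * k - 1
  · rcases fixed_or_mirrored x hx with h | h
    · exact h
    by_cases hxk : k - 1 ≤ x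
    · exact fixed_of_le x hxk hx
    · exact φ.injective (fixed_of_le (φ x) (by omega) (by omega))
  · exact hout x (by simpa using hx)
end

section
/- For every k ≥ 6, the k-uniform hypergraph G*_k, obtained from the interval hypergraph G_k on {v₁,...,v_{2k−1}} by adding one new vertex x and one new hyperedge M* = {x, v₁, ..., v_{k−2}, v_{k+2}}, is asymmetric. -/
/-!
An automorphism preserves degrees. The vertex `k - 1` (the paper's `v_k`) is the only vertex of
degree `k`, so it is fixed; `M*` is the only edge avoiding it, so `M*` is fixed; `0` is the only
vertex of degree `2` in `M*`, so it is fixed; hence so is the first interval `M₁`, the only other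
edge through `0`. Finally, the degree of a vertex together with its membership in `M*` and in `M₁`
determines the vertex.
-/

open Finset

namespace EdgeFamily

variable {α : Type*} [DecidableEq α]

def degree (H : Finset (Finset α)) (v : α) : ℕ := #{E ∈ H | v ∈ E}

def IsAut (H : Finset (Finset α)) (φ : Equiv.Perm α) : Prop :=
  ∀ E, E ∈ H ↔ E.image φ ∈ H

lemma degree_union_singleton {H : Finset (Finset α)} {E : Finset α} (hE : E ∉ H) (v : α) :
    degree (H ∪ {E}) v = degree H v + if v ∈ E then 1 else 0 := by
  rw [degree, filter_union, card_union_of_disjoint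
    (disjoint_filter_filter (disjoint_singleton_right.2 hE)), filter_singleton, degree]
  split_ifs <;> rfl

lemma IsAut.degree_apply {H : Finset (Finset α)} {φ : Equiv.Perm α} (hφ : IsAut H φ) (v : α) :
    degree H (φ v) = degree H v := by
  refine card_nbij' (·.image φ.symm) (·.image φ) (fun E hE => ?_) (fun E hE => ?_)
    (fun E _ => by simp [image_image]) (fun E _ => by simp [image_image])
  · simp only [coe_filter, Set.mem_ofPred_eq] at hE ⊢
    refine ⟨(hφ _).2 ?_, mem_image.2 ⟨φ v, hE.2, φ.symm_apply_apply v⟩⟩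
    simpa [image_image] using hE.1
  · simp only [coe_filter, Set.mem_ofPred_eq] at hE ⊢
    exact ⟨(hφ E).1 hE.1, mem_image_of_mem _ hE.2⟩

lemma apply_mem_iff_of_image_eq {φ : Equiv.Perm α} {E : Finset α} (h : E.image φ = E)
    (v : α) : φ v ∈ E ↔ v ∈ E := by
  conv_lhs => rw [← h]
  exact φ.injective.mem_finset_image

end EdgeFamily

namespace GStar

open EdgeFamily

def intervals (k : ℕ) : Finset (Finset ℕ) := (range k).image fun i => Ico i (i + k)

def Mstar (k : ℕ) : Finset ℕ := insert (2 * k - 1) (insert (k + 1) (range (k - 2)))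

def edges (k : ℕ) : Finset (Finset ℕ) := intervals k ∪ {Mstar k}

lemma mem_Mstar {k v : ℕ} : v ∈ Mstar k ↔ v < k - 2 ∨ v = k + 1 ∨ v = 2 * k - 1 := by
  simp only [Mstar, mem_insert, mem_range]
  omega

lemma mem_intervals {k : ℕ} {E : Finset ℕ} :
    E ∈ intervals k ↔ ∃ i < k, Ico i (i + k) = E := by
  simp [intervals]

lemma mem_edges {k : ℕ} {E : Finset ℕ} :
    E ∈ edges k ↔ (∃ i < k, Ico i (i + k) = E) ∨ E = Mstar k := by
  rw [edges, mem_union, mem_intervals, mem_singleton]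

lemma Mstar_notMem_intervals (k : ℕ) : Mstar k ∉ intervals k := by
  rw [mem_intervals]
  rintro ⟨i, hi, hE⟩
  have h : 2 * k - 1 ∈ Ico i (i + k) := hE ▸ mem_Mstar.2 (by omega)
  rw [mem_Ico] at h
  omega

lemma degree_intervals (k v : ℕ) : degree (intervals k) v = min (v + 1) k - (v + 1 - k) := by
  have hinj : Set.InjOn (fun i => Ico i (i + k)) (range k) := by
    intro i hi j hj hij
    have := Finset.ext_iff.1 hij
    have hi' := (this i).1
    have hj' := (this j).2
    simp only [coe_range, Set.mem_Iio, mem_Ico] at hi hj hi' hj'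
    omega
  rw [degree, intervals, filter_image, card_image_of_injOn (hinj.mono (filter_subset _ _))]
  convert Nat.card_Ico (v + 1 - k) (min (v + 1) k)
  ext i
  simp only [mem_filter, mem_range, mem_Ico, lt_min_iff]
  omega

lemma degree_edges (k v : ℕ) :
    degree (edges k) v = min (v + 1) k - (v + 1 - k) + if v ∈ Mstar k then 1 else 0 := by
  rw [edges, degree_union_singleton (Mstar_notMem_intervals k), degree_intervals]

lemma eq_sub_one_of_degree_edges_eq {k v : ℕ} (hk : 3 ≤ k) (h : degree (edges k) v = k) :
    v = k - 1 := by
  simp only [degree_edges, mem_Mstar] at h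
  split_ifs at h <;> omega

lemma eq_zero_of_degree_edges_eq_two {k v : ℕ} (hk : 4 ≤ k) (hv : v ∈ Mstar k)
    (h : degree (edges k) v = 2) : v = 0 := by
  rw [degree_edges, if_pos hv] at h
  rw [mem_Mstar] at hv
  omega

lemma eq_of_degree_edges_eq {k v w : ℕ} (hk : 4 ≤ k) (hv : v < 2 * k)
    (hdeg : degree (edges k) w = degree (edges k) v) (hM : w ∈ Mstar k ↔ v ∈ Mstar k)
    (hlt : w < k ↔ v < k) : w = v := by
  simp only [degree_edges, mem_Mstar] at hdeg hM
  split_ifs at hdeg <;> omega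

lemma eq_Mstar_of_mem_edges {k : ℕ} {E : Finset ℕ} (hE : E ∈ edges k) (h : k - 1 ∉ E) :
    E = Mstar k := by
  rcases mem_edges.1 hE with ⟨i, hi, rfl⟩ | rfl
  · exact absurd (mem_Ico.2 (by omega)) h
  · rfl

lemma eq_range_of_mem_edges {k : ℕ} {E : Finset ℕ} (hE : E ∈ edges k) (h0 : 0 ∈ E)
    (hM : E ≠ Mstar k) : E = range k := by
  rcases mem_edges.1 hE with ⟨i, hi, rfl⟩ | rfl
  · obtain rfl : i = 0 := by rw [mem_Ico] at h0; omega
    rw [range_eq_Ico, zero_add]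
  · exact absurd rfl hM

lemma apply_sub_one_of_isAut {k : ℕ} {φ : Equiv.Perm ℕ} (hφ : IsAut (edges k) φ)
    (hk : 3 ≤ k) : φ (k - 1) = k - 1 :=
  eq_sub_one_of_degree_edges_eq hk <| by
    rw [hφ.degree_apply, degree_edges, if_neg (by rw [mem_Mstar]; omega)]
    omega

lemma image_Mstar_of_isAut {k : ℕ} {φ : Equiv.Perm ℕ} (hφ : IsAut (edges k) φ)
    (hk : 3 ≤ k) : (Mstar k).image φ = Mstar k := by
  refine eq_Mstar_of_mem_edges ((hφ _).1 (mem_edges.2 (Or.inr rfl))) ?_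
  rw [← apply_sub_one_of_isAut hφ hk, φ.injective.mem_finset_image, mem_Mstar]
  omega

lemma apply_zero_of_isAut {k : ℕ} {φ : Equiv.Perm ℕ} (hφ : IsAut (edges k) φ)
    (hk : 4 ≤ k) : φ 0 = 0 := by
  have h0 : 0 ∈ Mstar k := mem_Mstar.2 (by omega)
  refine eq_zero_of_degree_edges_eq_two hk ?_ ?_
  · rwa [apply_mem_iff_of_image_eq (image_Mstar_of_isAut hφ (by omega))]
  · rw [hφ.degree_apply, degree_edges, if_pos h0]
    omega

lemma image_range_of_isAut {k : ℕ} {φ : Equiv.Perm ℕ} (hφ : IsAut (edges k) φ)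
    (hk : 4 ≤ k) : (range k).image φ = range k := by
  have hrange : range k ∈ edges k :=
    mem_edges.2 (Or.inl ⟨0, by omega, by rw [zero_add, range_eq_Ico]⟩)
  refine eq_range_of_mem_edges ((hφ _).1 hrange) ?_ ?_
  · rw [← apply_zero_of_isAut hφ hk]
    exact mem_image_of_mem _ (mem_range.2 (by omega))
  · rw [← image_Mstar_of_isAut hφ (by omega), Ne, (image_injective φ.injective).eq_iff]
    intro h
    have : 2 * k - 1 ∈ range k := h ▸ mem_Mstar.2 (by omega)
    rw [mem_range] at this
    omega

end GStar

open EdgeFamily GStar in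
/-- For every k ≥ 6, the k-uniform hypergraph G*_k obtained from
the interval hypergraph G_k on {0, ..., 2k-2} by adding the new vertex 2k-1
(standing for x) and the hyperedge M* = {x} ∪ {v₁,...,v_{k-2}} ∪ {v_{k+2}}
(i.e. {2k-1} ∪ {0,...,k-3} ∪ {k+1}) is asymmetric. -/
theorem stmt_15 (k : ℕ) (hk : 6 ≤ k) :
    ∀ φ : Equiv.Perm ℕ,
      (∀ x : ℕ, x ∉ Finset.range (2 * k) → φ x = x) →
      (∀ E : Finset ℕ,
        E ∈ ((Finset.range k).image (fun i => Finset.Ico i (i + k)) ∪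
              {insert (2 * k - 1) (insert (k + 1) (Finset.range (k - 2)))}) ↔
        E.image ⇑φ ∈ ((Finset.range k).image (fun i => Finset.Ico i (i + k)) ∪
              {insert (2 * k - 1) (insert (k + 1) (Finset.range (k - 2)))})) →
      φ = 1 := by
  intro φ hfix hφ
  change IsAut (edges k) φ at hφ
  ext v
  by_cases hv : v < 2 * k
  · refine eq_of_degree_edges_eq (by omega) hv (hφ.degree_apply v)
      (apply_mem_iff_of_image_eq (image_Mstar_of_isAut hφ (by omega)) v) ?_
    simpa using apply_mem_iff_of_image_eq (image_range_of_isAut hφ (by omega)) v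
  · exact hfix v (by simpa using hv)
end

section
/- For k ≥ 4, every non-trivial sub-k-graph of the interval hypergraph G_k with at least two vertices has an involution (a non-identity automorphism of order 2). -/
/-!
Swapping two distinct vertices that lie in exactly the same edges is an involution. Without edges,
any two vertices will do. Otherwise some interval `Ico i (i + k)` is an edge while, by
non-triviality, some `Ico j (j + k)` is not (the full edge set covers every vertex). The two
vertices on the boundary of `Ico j (j + k)` facing `i` (`j - 1, j` if `i < j`, and
`j + k - 1, j + k` if `j < i`) both lie in `Ico i (i + k)`, and the only interval separating them
is `Ico j (j + k)`.
-/

open Finset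

theorem Finset.image_swap_eq_self {α : Type*} [DecidableEq α] {a b : α} {E : Finset α}
    (h : a ∈ E ↔ b ∈ E) : E.image (Equiv.swap a b) = E := by
  ext y
  rw [← Equiv.coe_toEmbedding, ← map_eq_image, mem_map_equiv, Equiv.symm_swap]
  rcases eq_or_ne y a with rfl | hya
  · simpa using h.symm
  rcases eq_or_ne y b with rfl | hyb
  · simpa using h
  · rw [Equiv.swap_apply_of_ne_of_ne hya hyb]

theorem exists_involution_of_twins {α : Type*} [DecidableEq α] {X : Finset α}
    {M : Finset (Finset α)} {a b : α} (ha : a ∈ X) (hb : b ∈ X) (hab : a ≠ b)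
    (htwin : ∀ E ∈ M, a ∈ E ↔ b ∈ E) :
    ∃ φ : Equiv.Perm α, φ ≠ 1 ∧ φ * φ = 1 ∧ (∀ x, x ∉ X → φ x = x) ∧
      ∀ E : Finset α, E ∈ M ↔ E.image ⇑φ ∈ M := by
  refine ⟨Equiv.swap a b, ?_, Equiv.swap_mul_self a b, ?_, fun E => ⟨?_, ?_⟩⟩
  · simpa [Equiv.swap_eq_one_iff] using hab
  · intro x hx
    exact Equiv.swap_apply_of_ne_of_ne (by rintro rfl; exact hx ha) (by rintro rfl; exact hx hb)
  · intro hE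
    rwa [image_swap_eq_self (htwin E hE)]
  · intro hE
    have hfix := image_swap_eq_self (htwin _ hE)
    rwa [image_injective (Equiv.injective _) hfix] at hE

theorem exists_mem_Ico_add_of_lt {k x : ℕ} (hx : x < 2 * k - 1) :
    ∃ j < k, x ∈ Ico j (j + k) :=
  if hxk : x < k then ⟨0, by omega, mem_Ico.2 (by omega)⟩
  else ⟨x - k + 1, by omega, mem_Ico.2 (by omega)⟩

theorem exists_twins_of_ne {k i j : ℕ} (hi : i < k) (hj : j < k) (hij : i ≠ j) :
    ∃ a ∈ Ico i (i + k), ∃ b ∈ Ico i (i + k), a ≠ b ∧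
      ∀ l < k, l ≠ j → (a ∈ Ico l (l + k) ↔ b ∈ Ico l (l + k)) := by
  simp only [mem_Ico]
  rcases hij.lt_or_gt with hlt | hgt
  · exact ⟨j - 1, by omega, j, by omega, by omega, fun l _ hl => by omega⟩
  · exact ⟨j + k - 1, by omega, j + k, by omega, by omega, fun l hl _ => by omega⟩

theorem exists_Ico_notMem_of_ne_intervalEdges {k : ℕ} {X : Finset ℕ} {M : Finset (Finset ℕ)}
    (hX : X ⊆ range (2 * k - 1)) (hM : M ⊆ intervalEdges k) (hE : ∀ E ∈ M, E ⊆ X)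
    (hne : ¬(X = range (2 * k - 1) ∧ M = intervalEdges k)) :
    ∃ j < k, Ico j (j + k) ∉ M := by
  by_contra! hall
  have hMeq : M = intervalEdges k :=
    hM.antisymm fun E hE' => by
      obtain ⟨j, hj, rfl⟩ := mem_image.1 hE'
      exact hall j (mem_range.1 hj)
  refine hne ⟨hX.antisymm fun x hx => ?_, hMeq⟩
  obtain ⟨j, hj, hxj⟩ := exists_mem_Ico_add_of_lt (mem_range.1 hx)
  exact hE _ (hall j hj) hxj

theorem stmt_18_general (k : ℕ)
    (X' : Finset ℕ) (M' : Finset (Finset ℕ))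
    (hX : X' ⊆ Finset.range (2 * k - 1))
    (hMsub : M' ⊆ (Finset.range k).image (fun i => Finset.Ico i (i + k)))
    (hE : ∀ E ∈ M', E ⊆ X')
    (hcard : 2 ≤ X'.card)
    (hnontriv : ¬(X' = Finset.range (2 * k - 1) ∧
      M' = (Finset.range k).image (fun i => Finset.Ico i (i + k)))) :
    ∃ φ : Equiv.Perm ℕ, φ ≠ 1 ∧ φ * φ = 1 ∧
      (∀ x : ℕ, x ∉ X' → φ x = x) ∧
      ∀ E : Finset ℕ, E ∈ M' ↔ E.image ⇑φ ∈ M' := by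
  rcases M'.eq_empty_or_nonempty with rfl | ⟨E₀, hE₀⟩
  · obtain ⟨a, ha, b, hb, hab⟩ := one_lt_card.1 hcard
    exact exists_involution_of_twins ha hb hab (by simp)
  obtain ⟨i, hi, rfl⟩ := mem_image.1 (hMsub hE₀)
  obtain ⟨j, hj, hjM⟩ := exists_Ico_notMem_of_ne_intervalEdges hX hMsub hE hnontriv
  have hij : i ≠ j := by rintro rfl; exact hjM hE₀
  obtain ⟨a, ha, b, hb, hab, htwin⟩ := exists_twins_of_ne (mem_range.1 hi) hj hij
  refine exists_involution_of_twins (hE _ hE₀ ha) (hE _ hE₀ hb) hab fun E hEM => ?_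
  obtain ⟨l, hl, rfl⟩ := mem_image.1 (hMsub hEM)
  exact htwin l (mem_range.1 hl) (by rintro rfl; exact hjM hEM)

/-- For every k ≥ 4, every non-trivial sub-k-graph of the
interval hypergraph G_k (vertices {0,...,2k-2}, hyperedges {i,...,i+k-1} for
0 ≤ i ≤ k-1) with at least two vertices has an involution. -/
theorem stmt_18 (k : ℕ) (hk : 4 ≤ k)
    (X' : Finset ℕ) (M' : Finset (Finset ℕ))
    (hX : X' ⊆ Finset.range (2 * k - 1))
    (hMsub : M' ⊆ (Finset.range k).image (fun i => Finset.Ico i (i + k)))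
    (hE : ∀ E ∈ M', E ⊆ X')
    (hcard : 2 ≤ X'.card)
    (hnontriv : ¬(X' = Finset.range (2 * k - 1) ∧
      M' = (Finset.range k).image (fun i => Finset.Ico i (i + k)))) :
    ∃ φ : Equiv.Perm ℕ, φ ≠ 1 ∧ φ * φ = 1 ∧
      (∀ x : ℕ, x ∉ X' → φ x = x) ∧
      ∀ E : Finset ℕ, E ∈ M' ↔ E.image ⇑φ ∈ M' :=
  stmt_18_general k X' M' hX hMsub hE hcard hnontriv
end
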